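/- Let f : E → ℝ be differentiable, convex, and L-smooth with L > 0, and let x* ∈ E be a global minimizer of f. Let x : ℕ → E be the gradient descent sequence with constant step size λ = 1/L, i.e., x_{k+1} = x_k - (1/L)·∇f(x_k), starting from x_0 ∈ E. Then for every n ≥ 1, f(x_n) - f(x*) ≤ (L/(2n))·‖x_0 - x*‖². -/

import Mathlib

/-!
Smoothness gives the descent inequality `f (a + v) ≤ f a + ⟪∇f a, v⟫ + L/2 ‖v‖²`, so a step of
length `1/L` decreases `f` by at least `‖∇f a‖² / (2L)`. Adding the convex support inequality at `a`
and expanding `‖a - (1/L) ∇f a - z‖²` bounds `f (x (k+1)) - f z` by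
`L/2 (‖x k - z‖² - ‖x (k+1) - z‖²)` for every `z`. These bounds telescope, and since `f (x k)` is
nonincreasing, `n (f (x n) - f z) ≤ L/2 ‖x 0 - z‖²`.
-/

open RealInnerProductSpace

section Gradient

variable {E : Type*} [NormedAddCommGroup E] [InnerProductSpace ℝ E] [CompleteSpace E]

theorem HasGradientAt.hasDerivAt_comp_add_smul {f : E → ℝ} {g a v : E} {t : ℝ}
    (h : HasGradientAt f g (a + t • v)) :
    HasDerivAt (fun s : ℝ => f (a + s • v)) ⟪g, v⟫ t := by
  have hline : HasDerivAt (fun s : ℝ => a + s • v) v t := by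
    simpa using ((hasDerivAt_id t).smul_const v).const_add a
  have h' := (hasGradientAt_iff_hasFDerivAt.mp h).comp_hasDerivAt t hline
  simp only [Function.comp_def, InnerProductSpace.toDual_apply_apply] at h'
  exact h'

theorem ConvexOn.add_inner_le_of_hasGradientAt {s : Set E} {f : E → ℝ} {g a b : E}
    (hf : ConvexOn ℝ s f) (ha : a ∈ s) (hb : b ∈ s) (hg : HasGradientAt f g a) :
    f a + ⟪g, b - a⟫ ≤ f b := by
  have hline : ConvexOn ℝ (AffineMap.lineMap a b ⁻¹' s) fun t : ℝ => f (a + t • (b - a)) := by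
    have hcomp : f ∘ AffineMap.lineMap a b = fun t : ℝ => f (a + t • (b - a)) := by
      ext t
      simp [AffineMap.lineMap_apply_module', add_comm]
    simpa only [hcomp] using hf.comp_affineMap (AffineMap.lineMap a b)
  have hderiv : HasDerivAt (fun t : ℝ => f (a + t • (b - a))) ⟪g, b - a⟫ 0 :=
    HasGradientAt.hasDerivAt_comp_add_smul (by simpa using hg)
  have hslope := hline.le_slope_of_hasDerivAt (by simpa using ha) (by simpa using hb) one_pos hderiv
  simp only [slope_def_field, zero_smul, add_zero, one_smul, add_sub_cancel, sub_zero,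
    div_one] at hslope
  linarith

theorem le_add_inner_add_sq_of_lipschitz_gradient {f : E → ℝ} {f' : E → E} {L : ℝ}
    (hf : ∀ x, HasGradientAt f (f' x) x) (hlip : ∀ x y, ‖f' x - f' y‖ ≤ L * ‖x - y‖) (a v : E) :
    f (a + v) ≤ f a + ⟪f' a, v⟫ + L / 2 * ‖v‖ ^ 2 := by
  set φ : ℝ → ℝ := fun t => f (a + t • v) - t * ⟪f' a, v⟫
  have hφ : ∀ t, HasDerivAt φ (⟪f' (a + t • v), v⟫ - ⟪f' a, v⟫) t := fun t =>
    ((hf _).hasDerivAt_comp_add_smul).sub (by simpa using (hasDerivAt_id t).mul_const ⟪f' a, v⟫)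
  have hB : ∀ t, HasDerivAt (fun t : ℝ => f a + L / 2 * t ^ 2 * ‖v‖ ^ 2) (L * t * ‖v‖ ^ 2) t :=
    fun t =>
      ((((hasDerivAt_pow 2 t).const_mul (L / 2)).mul_const (‖v‖ ^ 2)).const_add (f a)).congr_deriv
        (by ring)
  have hderiv_le : ∀ t ∈ Set.Ico (0 : ℝ) 1, ⟪f' (a + t • v), v⟫ - ⟪f' a, v⟫ ≤ L * t * ‖v‖ ^ 2 := by
    rintro t ⟨ht, -⟩
    calc ⟪f' (a + t • v), v⟫ - ⟪f' a, v⟫ = ⟪f' (a + t • v) - f' a, v⟫ := (inner_sub_left ..).symm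
      _ ≤ ‖f' (a + t • v) - f' a‖ * ‖v‖ := real_inner_le_norm _ _
      _ ≤ L * ‖t • v‖ * ‖v‖ := by
        gcongr
        simpa using hlip (a + t • v) a
      _ = L * t * ‖v‖ ^ 2 := by rw [norm_smul, Real.norm_of_nonneg ht]; ring
  have hfence := image_le_of_deriv_right_le_deriv_boundary
    (fun t _ => (hφ t).continuousAt.continuousWithinAt)
    (fun t _ => (hφ t).hasDerivWithinAt) (by simp [φ])
    (fun t _ => (hB t).continuousAt.continuousWithinAt)
    (fun t _ => (hB t).hasDerivWithinAt) hderiv_le (Set.right_mem_Icc.mpr zero_le_one)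
  simp only [φ, one_smul, one_mul, one_pow] at hfence
  linarith

theorem sufficient_decrease_of_lipschitz_gradient {f : E → ℝ} {f' : E → E} {L : ℝ} (hL : 0 < L)
    (hf : ∀ x, HasGradientAt f (f' x) x) (hlip : ∀ x y, ‖f' x - f' y‖ ≤ L * ‖x - y‖) (a : E) :
    f (a - (1 / L) • f' a) ≤ f a - 1 / (2 * L) * ‖f' a‖ ^ 2 := by
  have h := le_add_inner_add_sq_of_lipschitz_gradient hf hlip a (-((1 / L) • f' a))
  rw [← sub_eq_add_neg, inner_neg_right, real_inner_smul_right, real_inner_self_eq_norm_sq,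
    norm_neg, norm_smul, Real.norm_of_nonneg (by positivity)] at h
  convert h using 1
  field_simp
  ring

theorem gradient_step_sub_le_sq_norm_sub_sq_norm {f : E → ℝ} {f' : E → E} {L : ℝ} (hL : 0 < L)
    (hf : ∀ x, HasGradientAt f (f' x) x) (hconv : ConvexOn ℝ Set.univ f)
    (hlip : ∀ x y, ‖f' x - f' y‖ ≤ L * ‖x - y‖) (a z : E) :
    f (a - (1 / L) • f' a) - f z ≤ L / 2 * (‖a - z‖ ^ 2 - ‖a - (1 / L) • f' a - z‖ ^ 2) := by
  have hdecrease := sufficient_decrease_of_lipschitz_gradient hL hf hlip a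
  have hsupport := hconv.add_inner_le_of_hasGradientAt (Set.mem_univ a) (Set.mem_univ z) (hf a)
  have hexpand : ‖a - (1 / L) • f' a - z‖ ^ 2
      = ‖a - z‖ ^ 2 - 2 * (1 / L) * ⟪f' a, a - z⟫ + (1 / L) ^ 2 * ‖f' a‖ ^ 2 := by
    rw [sub_right_comm, norm_sub_sq_real, real_inner_smul_right, real_inner_comm, norm_smul,
      Real.norm_of_nonneg (by positivity)]
    ring
  have hflip : ⟪f' a, z - a⟫ = -⟪f' a, a - z⟫ := by rw [← inner_neg_right, neg_sub]
  have hrhs : L / 2 * (‖a - z‖ ^ 2 - ‖a - (1 / L) • f' a - z‖ ^ 2)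
      = ⟪f' a, a - z⟫ - 1 / (2 * L) * ‖f' a‖ ^ 2 := by
    rw [hexpand]
    field_simp
    ring
  linarith

end Gradient

open Finset in
theorem Antitone.nsmul_le_of_le_sub_succ {α : Type*} [AddCommGroup α] [PartialOrder α]
    [IsOrderedAddMonoid α] {e D : ℕ → α} (he : Antitone e) (hD : ∀ k, 0 ≤ D k)
    (h : ∀ k, e (k + 1) ≤ D k - D (k + 1)) (n : ℕ) : n • e n ≤ D 0 :=
  calc n • e n = ∑ _k ∈ range n, e n := by rw [sum_const, card_range]
    _ ≤ ∑ k ∈ range n, e (k + 1) := sum_le_sum fun k hk => he (mem_range.mp hk)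
    _ ≤ ∑ k ∈ range n, (D k - D (k + 1)) := sum_le_sum fun k _ => h k
    _ = D 0 - D n := sum_range_sub' D n
    _ ≤ D 0 := sub_le_self _ (hD n)

theorem gd_convex_convergence_general {E : Type*} [NormedAddCommGroup E] [InnerProductSpace ℝ E]
    [CompleteSpace E]
    (f : E → ℝ) (f' : E → E) (L : ℝ) (hL : 0 < L)
    (hdiff : ∀ x, HasGradientAt f (f' x) x)
    (hconv : ConvexOn ℝ Set.univ f)
    (hsmooth : ∀ x y, ‖f' x - f' y‖ ≤ L * ‖x - y‖)
    (xstar : E)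
    (x : ℕ → E)
    (hiter : ∀ k, x (k + 1) = x k - (1 / L) • f' (x k)) :
    ∀ n : ℕ, 1 ≤ n →
      f (x n) - f xstar ≤ (L / (2 * n)) * ‖x 0 - xstar‖ ^ 2 := by
  intro n hn
  have hmono : Antitone fun k => f (x k) - f xstar := antitone_nat_of_succ_le fun k => by
    have hdecrease := sufficient_decrease_of_lipschitz_gradient hL hdiff hsmooth (x k)
    have hgap : 0 ≤ 1 / (2 * L) * ‖f' (x k)‖ ^ 2 := by positivity
    rw [hiter k]
    linarith
  have htelescope := hmono.nsmul_le_of_le_sub_succ (D := fun k => L / 2 * ‖x k - xstar‖ ^ 2)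
    (fun k => by positivity)
    (fun k => by simpa only [hiter k, mul_sub] using
      gradient_step_sub_le_sq_norm_sub_sq_norm hL hdiff hconv hsmooth (x k) xstar) n
  rw [nsmul_eq_mul] at htelescope
  rw [div_mul_eq_mul_div, le_div_iff₀ (by positivity)]
  linarith

theorem gd_convex_convergence {E : Type*} [NormedAddCommGroup E] [InnerProductSpace ℝ E]
    [CompleteSpace E]
    (f : E → ℝ) (f' : E → E) (L : ℝ) (hL : 0 < L)
    (hdiff : ∀ x, HasGradientAt f (f' x) x)
    (hconv : ConvexOn ℝ Set.univ f)
    (hsmooth : ∀ x y, ‖f' x - f' y‖ ≤ L * ‖x - y‖)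
    (xstar : E) (hmin : ∀ y, f xstar ≤ f y)
    (x : ℕ → E)
    (hiter : ∀ k, x (k + 1) = x k - (1 / L) • f' (x k)) :
    ∀ n : ℕ, 1 ≤ n →
      f (x n) - f xstar ≤ (L / (2 * n)) * ‖x 0 - xstar‖ ^ 2 :=
  gd_convex_convergence_general f f' L hL hdiff hconv hsmooth xstar x hiter
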